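/- In every Hilbert geometry, for each R > 0 there exist constants 0 < v(R) ≤ V(R), independent of the convex set, such that the volume of any metric ball of radius R in any n-dimensional Hilbert geometry (Ω, d_Ω) is between v(R) and V(R). Consequently, there is K = K(n) such that in any Hilbert geometry, every ball of radius 4 can be covered by at most K balls of radius 1. -/

import Mathlib

open Metric MeasureTheory

noncomputable section
open scoped Classical

variable {E : Type*} [NormedAddCommGroup E] [NormedSpace ℝ E]

def chordSup (Ω : Set E) (x y : E) : ℝ := sSup {t : ℝ | x + t • (y - x) ∈ Ω}

def chordInf (Ω : Set E) (x y : E) : ℝ := sInf {t : ℝ | x + t • (y - x) ∈ Ω}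

def chordA (Ω : Set E) (x y : E) : E := x + chordSup Ω x y • (y - x)

def chordB (Ω : Set E) (x y : E) : E := x + chordInf Ω x y • (y - x)

/-- The Hilbert distance `d_Ω(x,y) = ½ log [a:b:x:y]`. -/
def hilbertDist (Ω : Set E) (x y : E) : ℝ :=
  if x = y then 0 else
    (1 / 2) * Real.log ((dist (chordA Ω x y) x * dist (chordB Ω x y) y) /
      (dist (chordA Ω x y) y * dist (chordB Ω x y) x))

/-- Metric ball of the Hilbert geometry `(Ω, d_Ω)`. -/
def hilbertBall (Ω : Set E) (x : E) (R : ℝ) : Set E := {y ∈ Ω | hilbertDist Ω x y < R}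

/-- Time to exit `Ω` from `x` in direction `v`. -/
def exitTime (Ω : Set E) (x v : E) : ℝ := sSup {t : ℝ | 0 < t ∧ x + t • v ∈ Ω}

/-- The Finsler norm of the Hilbert metric at `x ∈ Ω`. -/
def finslerNorm (Ω : Set E) (x v : E) : ℝ :=
  (1 / 2) * (1 / exitTime Ω x v + 1 / exitTime Ω x (-v))

/-- The Busemann volume of `A ⊆ Ω` in the Hilbert geometry `(Ω, d_Ω)`:
the integral over `A` of the ratio of the Lebesgue volume of the Euclidean unit ball to
the Lebesgue volume of the unit ball of the Finsler norm. -/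
def busemannVolume {n : ℕ} (Ω : Set (EuclideanSpace ℝ (Fin n)))
    (A : Set (EuclideanSpace ℝ (Fin n))) : ENNReal :=
  ∫⁻ x in A, ENNReal.ofReal
    ((volume (ball (0 : EuclideanSpace ℝ (Fin n)) 1)).toReal /
      (volume {v : EuclideanSpace ℝ (Fin n) | finslerNorm Ω x v < 1}).toReal)

end

/-!
Everything is controlled by the symmetric core `S_x = {w | x + w ∈ Ω ∧ x - w ∈ Ω}`. Writing the
Hilbert distance through the exit times of the chord through `x` and `y`, one finds that the
ball of radius `R` about `x` lies between `x + tanh R • S_x` and `x + (exp (2R) - 1) • S_x`, that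
the Finsler unit ball at `x` lies between `S_x` and `2 • S_x`, and that `S_x ⊆ exp (2R) • S_y`
whenever `d(x, y) < R`. So on a ball of radius `R` the Busemann density is comparable to
`1 / vol S_x` while the Lebesgue volume of the ball is comparable to `vol S_x`, with constants
depending only on `R` and `n`. For the covering, disjoint translates `y + (c / 2) • S_x` with `y`
in the ball of radius 4 fit into `x + C • S_x`, which bounds their number, and for a maximal such
family the translates `y + c • S_x`, each inside the unit ball about `y`, cover.
-/

open Set Bornology Pointwise Real

lemma IsOpen.subset_Ioo_csInf_csSup {T : Set ℝ} (hTo : IsOpen T) (hTb : IsBounded T) :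
    T ⊆ Ioo (sInf T) (sSup T) := by
  intro t ht
  obtain ⟨l, u, ⟨hlt, htu⟩, hsub⟩ := mem_nhds_iff_exists_Ioo_subset.1 (hTo.mem_nhds ht)
  constructor
  · calc sInf T ≤ (l + t) / 2 := csInf_le hTb.bddBelow (hsub ⟨by linarith, by linarith⟩)
      _ < t := by linarith
  · calc t < (t + u) / 2 := by linarith
      _ ≤ sSup T := le_csSup hTb.bddAbove (hsub ⟨by linarith, by linarith⟩)

lemma tanh_pos {R : ℝ} (hR : 0 < R) : 0 < tanh R := by
  rw [tanh_eq_sinh_div_cosh]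
  exact div_pos (sinh_pos_iff.2 hR) (cosh_pos R)

lemma one_add_tanh_div_one_sub_tanh (R : ℝ) : (1 + tanh R) / (1 - tanh R) = exp (2 * R) := by
  have h := exp_pos R
  rw [tanh_eq, exp_neg, two_mul, exp_add]
  field_simp
  ring

section SymmCore

variable {E : Type*} [NormedAddCommGroup E] {Ω : Set E} {x w : E}

def symmCore (Ω : Set E) (x : E) : Set E := {w | x + w ∈ Ω ∧ x - w ∈ Ω}

lemma zero_mem_symmCore (hx : x ∈ Ω) : (0 : E) ∈ symmCore Ω x := by
  simp [symmCore, hx]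

lemma neg_mem_symmCore (hw : w ∈ symmCore Ω x) : -w ∈ symmCore Ω x := by
  simpa [symmCore, ← sub_eq_add_neg, and_comm] using hw

lemma isOpen_symmCore (hΩo : IsOpen Ω) (x : E) : IsOpen (symmCore Ω x) :=
  (hΩo.preimage (by fun_prop)).inter (hΩo.preimage (by fun_prop))

lemma isBounded_symmCore (hΩb : IsBounded Ω) (x : E) : IsBounded (symmCore Ω x) :=
  (hΩb.vadd (-x)).subset fun w hw => by
    rw [mem_vadd_set_iff_neg_vadd_mem, neg_neg, vadd_eq_add]
    exact hw.1

end SymmCore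

section HilbertGeometry

variable {E : Type*} [NormedAddCommGroup E] [NormedSpace ℝ E] {Ω : Set E} {x y z v w : E}

lemma convex_symmCore (hΩc : Convex ℝ Ω) (x : E) : Convex ℝ (symmCore Ω x) := by
  have h := hΩc.translate_preimage_right x
  have hneg : {w | x - w ∈ Ω} = -((fun w => x + w) ⁻¹' Ω) := by
    ext w
    simp [sub_eq_add_neg]
  have h' := h.neg
  rw [← hneg] at h'
  exact h.inter h'

lemma isBounded_lineSet (hΩb : IsBounded Ω) (x : E) (hv : v ≠ 0) :
    IsBounded {t : ℝ | x + t • v ∈ Ω} := by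
  obtain ⟨M, hM⟩ := isBounded_iff_forall_norm_le.1 hΩb
  refine isBounded_iff_forall_norm_le.2 ⟨(M + ‖x‖) / ‖v‖, fun t ht => ?_⟩
  rw [le_div_iff₀ (norm_pos_iff.2 hv), ← norm_smul]
  calc ‖t • v‖ = ‖(x + t • v) - x‖ := by rw [add_sub_cancel_left]
    _ ≤ M + ‖x‖ := by linarith [norm_sub_le (x + t • v) x, hM _ ht]

lemma exists_lineSet_eq_Ioo (hΩo : IsOpen Ω) (hΩc : Convex ℝ Ω) (hΩb : IsBounded Ω)
    (hx : x ∈ Ω) (hv : v ≠ 0) :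
    ∃ a b : ℝ, a < 0 ∧ 0 < b ∧ {t : ℝ | x + t • v ∈ Ω} = Ioo a b := by
  set T := {t : ℝ | x + t • v ∈ Ω}
  have h0 : (0 : ℝ) ∈ T := by simpa [T] using hx
  have hTo : IsOpen T := hΩo.preimage (by fun_prop)
  have hTc : Convex ℝ T := by
    have hline : ⇑(AffineMap.lineMap x (x + v)) = fun t : ℝ => x + t • v := by
      ext t; simp [AffineMap.lineMap_apply_module', add_comm]
    have := hΩc.affine_preimage (AffineMap.lineMap x (x + v))
    rw [hline] at this
    exact this
  have hTb := isBounded_lineSet hΩb x hv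
  have hT : T = Ioo (sInf T) (sSup T) := (hTo.subset_Ioo_csInf_csSup hTb).antisymm
    (IsConnected.Ioo_csInf_csSup_subset ⟨⟨0, h0⟩, hTc.isPreconnected⟩ hTb.bddBelow hTb.bddAbove)
  rw [hT] at h0
  exact ⟨_, _, h0.1, h0.2, hT⟩

lemma exitTime_eq_of_lineSet_eq_Ioo {a b : ℝ} (h : {t : ℝ | x + t • v ∈ Ω} = Ioo a b)
    (ha : a < 0) (hb : 0 < b) : exitTime Ω x v = b := by
  have hmem : ∀ t, x + t • v ∈ Ω ↔ a < t ∧ t < b := fun t => by rw [← mem_Ioo, ← h]; rfl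
  have hpos : {t : ℝ | 0 < t ∧ x + t • v ∈ Ω} = Ioo 0 b := by
    ext t
    simp only [mem_ofPred_eq, mem_Ioo, hmem]
    exact ⟨fun ⟨h0, _, hb'⟩ => ⟨h0, hb'⟩, fun ⟨h0, hb'⟩ => ⟨h0, by linarith, hb'⟩⟩
  rw [exitTime, hpos, csSup_Ioo hb]

lemma lineSet_eq_Ioo (hΩo : IsOpen Ω) (hΩc : Convex ℝ Ω) (hΩb : IsBounded Ω)
    (hx : x ∈ Ω) (hv : v ≠ 0) :
    {t : ℝ | x + t • v ∈ Ω} = Ioo (-exitTime Ω x (-v)) (exitTime Ω x v) := by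
  obtain ⟨a, b, ha, hb, h⟩ := exists_lineSet_eq_Ioo hΩo hΩc hΩb hx hv
  have hneg : {t : ℝ | x + t • -v ∈ Ω} = Ioo (-b) (-a) := by
    ext t
    have := congrArg (-t ∈ ·) h
    simp only [mem_ofPred_eq, neg_smul, mem_Ioo, eq_iff_iff] at this
    simp only [mem_ofPred_eq, smul_neg, this, mem_Ioo]
    constructor <;> intro ht <;> constructor <;> linarith [ht.1, ht.2]
  rw [exitTime_eq_of_lineSet_eq_Ioo h ha hb, exitTime_eq_of_lineSet_eq_Ioo hneg (by linarith)
    (by linarith), neg_neg, h]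

lemma add_smul_mem_iff (hΩo : IsOpen Ω) (hΩc : Convex ℝ Ω) (hΩb : IsBounded Ω)
    (hx : x ∈ Ω) (hv : v ≠ 0) {t : ℝ} :
    x + t • v ∈ Ω ↔ -exitTime Ω x (-v) < t ∧ t < exitTime Ω x v := by
  rw [← mem_Ioo, ← lineSet_eq_Ioo hΩo hΩc hΩb hx hv]
  rfl

lemma exitTime_pos (hΩo : IsOpen Ω) (hΩc : Convex ℝ Ω) (hΩb : IsBounded Ω)
    (hx : x ∈ Ω) (hv : v ≠ 0) : 0 < exitTime Ω x v :=
  ((add_smul_mem_iff hΩo hΩc hΩb hx hv).1 (by simpa using hx)).2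

lemma add_smul_mem_iff_lt_exitTime (hΩo : IsOpen Ω) (hΩc : Convex ℝ Ω) (hΩb : IsBounded Ω)
    (hx : x ∈ Ω) (hv : v ≠ 0) {t : ℝ} (ht : 0 < t) : x + t • v ∈ Ω ↔ t < exitTime Ω x v := by
  have := exitTime_pos hΩo hΩc hΩb hx (neg_ne_zero.2 hv)
  rw [add_smul_mem_iff hΩo hΩc hΩb hx hv]
  exact ⟨And.right, fun h => ⟨by linarith, h⟩⟩

lemma exitTime_zero (hx : x ∈ Ω) : exitTime Ω x 0 = 0 := by
  have : {t : ℝ | 0 < t ∧ x + t • (0 : E) ∈ Ω} = Ioi 0 := by ext t; simp [hx]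
  rw [exitTime, this, Real.sSup_of_not_bddAbove (not_bddAbove_Ioi _)]

lemma exitTime_add_smul (hΩo : IsOpen Ω) (hΩc : Convex ℝ Ω) (hΩb : IsBounded Ω)
    (hx : x ∈ Ω) (hv : v ≠ 0) {s : ℝ} (hs : x + s • v ∈ Ω) :
    exitTime Ω (x + s • v) v = exitTime Ω x v - s := by
  have hs' := (add_smul_mem_iff hΩo hΩc hΩb hx hv).1 hs
  refine exitTime_eq_of_lineSet_eq_Ioo (a := -exitTime Ω x (-v) - s) ?_ (by linarith)
    (by linarith)
  ext t
  rw [mem_ofPred_eq, add_assoc, ← add_smul, add_smul_mem_iff hΩo hΩc hΩb hx hv, mem_Ioo]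
  constructor <;> intro h <;> constructor <;> linarith [h.1, h.2]

lemma chordSup_eq_exitTime (hΩo : IsOpen Ω) (hΩc : Convex ℝ Ω) (hΩb : IsBounded Ω)
    (hx : x ∈ Ω) (hxy : x ≠ y) : chordSup Ω x y = exitTime Ω x (y - x) := by
  have hv : y - x ≠ 0 := sub_ne_zero.2 hxy.symm
  rw [chordSup, lineSet_eq_Ioo hΩo hΩc hΩb hx hv, csSup_Ioo]
  linarith [exitTime_pos hΩo hΩc hΩb hx hv, exitTime_pos hΩo hΩc hΩb hx (neg_ne_zero.2 hv)]

lemma chordInf_eq_neg_exitTime (hΩo : IsOpen Ω) (hΩc : Convex ℝ Ω) (hΩb : IsBounded Ω)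
    (hx : x ∈ Ω) (hxy : x ≠ y) : chordInf Ω x y = -exitTime Ω x (x - y) := by
  have hv : y - x ≠ 0 := sub_ne_zero.2 hxy.symm
  rw [chordInf, lineSet_eq_Ioo hΩo hΩc hΩb hx hv, csInf_Ioo, neg_sub]
  linarith [exitTime_pos hΩo hΩc hΩb hx hv, exitTime_pos hΩo hΩc hΩb hx (neg_ne_zero.2 hv)]

lemma one_lt_exitTime_sub (hΩo : IsOpen Ω) (hΩc : Convex ℝ Ω) (hΩb : IsBounded Ω)
    (hx : x ∈ Ω) (hy : y ∈ Ω) (hxy : x ≠ y) : 1 < exitTime Ω x (y - x) :=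
  (add_smul_mem_iff_lt_exitTime hΩo hΩc hΩb hx (sub_ne_zero.2 hxy.symm) one_pos).1
    (by simpa using hy)

/-- The chord through `x` and `y` leaves `Ω` at `x + b • (y - x)` and `x - a • (y - x)`, where
`b` and `a` are the two exit times, so the cross ratio is `b * (1 + a) / ((b - 1) * a)`. -/
lemma exp_two_mul_hilbertDist (hΩo : IsOpen Ω) (hΩc : Convex ℝ Ω) (hΩb : IsBounded Ω)
    (hx : x ∈ Ω) (hy : y ∈ Ω) (hxy : x ≠ y) :
    exp (2 * hilbertDist Ω x y) =
      (1 + (exitTime Ω x (x - y))⁻¹) / (1 - (exitTime Ω x (y - x))⁻¹) := by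
  have hb := one_lt_exitTime_sub hΩo hΩc hΩb hx hy hxy
  have ha := exitTime_pos hΩo hΩc hΩb hx (sub_ne_zero.2 hxy)
  have hd : 0 < dist x y := dist_pos.2 hxy
  set b := exitTime Ω x (y - x)
  set a := exitTime Ω x (x - y)
  have hA : chordA Ω x y = AffineMap.lineMap x y b := by
    rw [chordA, chordSup_eq_exitTime hΩo hΩc hΩb hx hxy, AffineMap.lineMap_apply_module',
      add_comm]
  have hB : chordB Ω x y = AffineMap.lineMap x y (-a) := by
    rw [chordB, chordInf_eq_neg_exitTime hΩo hΩc hΩb hx hxy, AffineMap.lineMap_apply_module',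
      add_comm]
  have hratio : dist (chordA Ω x y) x * dist (chordB Ω x y) y /
      (dist (chordA Ω x y) y * dist (chordB Ω x y) x) = (1 + a⁻¹) / (1 - b⁻¹) := by
    rw [hA, hB, dist_lineMap_left, dist_lineMap_right, dist_lineMap_left, dist_lineMap_right,
      Real.norm_eq_abs, Real.norm_eq_abs, Real.norm_eq_abs, Real.norm_eq_abs,
      abs_of_pos (by linarith : 0 < b), abs_of_pos (by linarith : 0 < 1 - -a),
      abs_of_neg (by linarith : 1 - b < 0), abs_of_neg (by linarith : -a < 0)]
    have : b - 1 ≠ 0 := by linarith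
    have : 1 - b ≠ 0 := by linarith
    have : b ≠ 0 := by linarith
    have := ha.ne'
    field_simp
    ring
  have hpos : 0 < (1 + a⁻¹) / (1 - b⁻¹) :=
    div_pos (by positivity) (sub_pos.2 (inv_lt_one_of_one_lt₀ hb))
  rw [hilbertDist, if_neg hxy, hratio, ← mul_assoc, mul_one_div_cancel two_ne_zero, one_mul,
    exp_log hpos]

lemma hilbertDist_self (Ω : Set E) (x : E) : hilbertDist Ω x x = 0 := if_pos rfl

lemma hilbertDist_comm (hΩo : IsOpen Ω) (hΩc : Convex ℝ Ω) (hΩb : IsBounded Ω)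
    (hx : x ∈ Ω) (hy : y ∈ Ω) : hilbertDist Ω x y = hilbertDist Ω y x := by
  rcases eq_or_ne x y with rfl | hxy
  · rfl
  have hv : y - x ≠ 0 := sub_ne_zero.2 hxy.symm
  have hb := one_lt_exitTime_sub hΩo hΩc hΩb hx hy hxy
  have ha := exitTime_pos hΩo hΩc hΩb hx (sub_ne_zero.2 hxy)
  have hyb : exitTime Ω y (y - x) = exitTime Ω x (y - x) - 1 := by
    simpa using exitTime_add_smul hΩo hΩc hΩb hx hv (s := 1) (by simpa using hy)
  have hya : exitTime Ω y (x - y) = exitTime Ω x (x - y) + 1 := by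
    simpa using exitTime_add_smul hΩo hΩc hΩb hx (sub_ne_zero.2 hxy) (s := -1)
      (by simpa using hy)
  have hexp : exp (2 * hilbertDist Ω x y) = exp (2 * hilbertDist Ω y x) := by
    rw [exp_two_mul_hilbertDist hΩo hΩc hΩb hx hy hxy,
      exp_two_mul_hilbertDist hΩo hΩc hΩb hy hx hxy.symm, hyb, hya]
    generalize exitTime Ω x (y - x) = b at hb
    generalize exitTime Ω x (x - y) = a at ha
    have : b - 1 ≠ 0 := by linarith
    have := ha.ne'
    rw [div_eq_div_iff (sub_pos.2 (inv_lt_one_of_one_lt₀ hb)).ne'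
      (sub_pos.2 (inv_lt_one_of_one_lt₀ (by linarith))).ne']
    field_simp
    ring
  linarith [exp_injective hexp]

lemma hilbertDist_nonneg (hΩo : IsOpen Ω) (hΩc : Convex ℝ Ω) (hΩb : IsBounded Ω)
    (hx : x ∈ Ω) (hy : y ∈ Ω) : 0 ≤ hilbertDist Ω x y := by
  rcases eq_or_ne x y with rfl | hxy
  · rw [hilbertDist_self]
  have hβ0 := inv_pos.2 (exitTime_pos hΩo hΩc hΩb hx (sub_ne_zero.2 hxy.symm))
  have hβ1 := inv_lt_one_of_one_lt₀ (one_lt_exitTime_sub hΩo hΩc hΩb hx hy hxy)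
  have hα0 := inv_pos.2 (exitTime_pos hΩo hΩc hΩb hx (sub_ne_zero.2 hxy))
  have h : 1 ≤ exp (2 * hilbertDist Ω x y) := by
    rw [exp_two_mul_hilbertDist hΩo hΩc hΩb hx hy hxy, one_le_div (by linarith)]
    linarith
  linarith [one_le_exp_iff.1 h]

lemma mem_hilbertBall_comm (hΩo : IsOpen Ω) (hΩc : Convex ℝ Ω) (hΩb : IsBounded Ω)
    (hx : x ∈ Ω) {R : ℝ} (hy : y ∈ hilbertBall Ω x R) : x ∈ hilbertBall Ω y R :=
  ⟨hx, hilbertDist_comm hΩo hΩc hΩb hy.1 hx ▸ hy.2⟩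

lemma mem_symmCore_iff (hΩo : IsOpen Ω) (hΩc : Convex ℝ Ω) (hΩb : IsBounded Ω)
    (hx : x ∈ Ω) (hw : w ≠ 0) :
    w ∈ symmCore Ω x ↔ 1 < exitTime Ω x w ∧ 1 < exitTime Ω x (-w) := by
  rw [← add_smul_mem_iff_lt_exitTime hΩo hΩc hΩb hx hw one_pos,
    ← add_smul_mem_iff_lt_exitTime hΩo hΩc hΩb hx (neg_ne_zero.2 hw) one_pos, one_smul,
    one_smul, ← sub_eq_add_neg]
  rfl

lemma sub_mem_smul_symmCore (hΩo : IsOpen Ω) (hΩc : Convex ℝ Ω) (hΩb : IsBounded Ω)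
    (hx : x ∈ Ω) {R : ℝ} (hy : y ∈ hilbertBall Ω x R) :
    y - x ∈ (exp (2 * R) - 1) • symmCore Ω x := by
  obtain ⟨hyΩ, hd⟩ := hy
  rcases eq_or_ne x y with rfl | hxy
  · rw [sub_self]
    exact zero_mem_smul_set (zero_mem_symmCore hx)
  have hb := one_lt_exitTime_sub hΩo hΩc hΩb hx hyΩ hxy
  have ha := exitTime_pos hΩo hΩc hΩb hx (sub_ne_zero.2 hxy)
  have hρ : (1 + (exitTime Ω x (x - y))⁻¹) / (1 - (exitTime Ω x (y - x))⁻¹) < exp (2 * R) := by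
    rw [← exp_two_mul_hilbertDist hΩo hΩc hΩb hx hyΩ hxy]
    exact exp_lt_exp.2 (by linarith)
  set a := exitTime Ω x (x - y)
  set b := exitTime Ω x (y - x)
  set ρ := exp (2 * R)
  have hβ0 : 0 < b⁻¹ := inv_pos.2 (by linarith)
  have hβ1 : b⁻¹ < 1 := inv_lt_one_of_one_lt₀ hb
  have hα0 : 0 < a⁻¹ := inv_pos.2 ha
  rw [div_lt_iff₀ (by linarith)] at hρ
  have hρ1 : 1 < ρ := by nlinarith
  have hb' : (ρ - 1)⁻¹ < b := by rw [inv_lt_comm₀ (by linarith) (by linarith)]; nlinarith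
  have ha' : (ρ - 1)⁻¹ < a := by rw [inv_lt_comm₀ (by linarith) ha]; nlinarith
  have hpos : 0 < (ρ - 1)⁻¹ := inv_pos.2 (by linarith)
  refine ⟨(ρ - 1)⁻¹ • (y - x), ⟨?_, ?_⟩, smul_inv_smul₀ (by linarith) _⟩
  · exact (add_smul_mem_iff_lt_exitTime hΩo hΩc hΩb hx (sub_ne_zero.2 hxy.symm) hpos).2 hb'
  · rw [sub_eq_add_neg, ← smul_neg, neg_sub]
    exact (add_smul_mem_iff_lt_exitTime hΩo hΩc hΩb hx (sub_ne_zero.2 hxy) hpos).2 ha'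

lemma add_tanh_smul_mem_hilbertBall (hΩo : IsOpen Ω) (hΩc : Convex ℝ Ω) (hΩb : IsBounded Ω)
    (hx : x ∈ Ω) (hw : w ∈ symmCore Ω x) {R : ℝ} (hR : 0 < R) :
    x + tanh R • w ∈ hilbertBall Ω x R := by
  set s := tanh R
  have hs0 : 0 < s := tanh_pos hR
  have hs1 : s < 1 := tanh_lt_one R
  rcases eq_or_ne w 0 with rfl | hw0
  · simpa [hilbertBall, hilbertDist_self] using ⟨hx, hR⟩
  have hsw : s • w ≠ 0 := smul_ne_zero hs0.ne' hw0
  have hy : x + s • w ∈ Ω := hΩc.add_smul_mem hx hw.1 ⟨hs0.le, hs1.le⟩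
  have hxy : x ≠ x + s • w := by simp [hs0.ne', hw0]
  have hb : s⁻¹ < exitTime Ω x (x + s • w - x) := by
    rw [add_sub_cancel_left, ← add_smul_mem_iff_lt_exitTime hΩo hΩc hΩb hx hsw (inv_pos.2 hs0),
      inv_smul_smul₀ hs0.ne']
    exact hw.1
  have ha : s⁻¹ < exitTime Ω x (x - (x + s • w)) := by
    rw [sub_add_cancel_left, ← smul_neg, ← add_smul_mem_iff_lt_exitTime hΩo hΩc hΩb hx
      (smul_ne_zero hs0.ne' (neg_ne_zero.2 hw0)) (inv_pos.2 hs0), inv_smul_smul₀ hs0.ne',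
      ← sub_eq_add_neg]
    exact hw.2
  refine ⟨hy, ?_⟩
  have hlt : exp (2 * hilbertDist Ω x (x + s • w)) < exp (2 * R) := by
    rw [exp_two_mul_hilbertDist hΩo hΩc hΩb hx hy hxy, ← one_add_tanh_div_one_sub_tanh]
    have hα := inv_lt_of_inv_lt₀ hs0 ha
    have hβ := inv_lt_of_inv_lt₀ hs0 hb
    have hα0 := inv_pos.2 ((inv_pos.2 hs0).trans ha)
    have hβ0 := inv_pos.2 ((inv_pos.2 hs0).trans hb)
    rw [div_lt_div_iff₀ (by linarith) (by linarith)]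
    nlinarith
  linarith [exp_lt_exp.1 hlt]

lemma smul_symmCore_subset (hΩc : Convex ℝ Ω) (hz : z ∈ Ω) {c : ℝ} (hc0 : 0 ≤ c) (hc1 : c ≤ 1) :
    c • symmCore Ω x ⊆ symmCore Ω (c • x + (1 - c) • z) := by
  rintro _ ⟨w, hw, rfl⟩
  constructor
  · convert hΩc hw.1 hz hc0 (sub_nonneg.2 hc1) (add_sub_cancel c 1) using 1
    module
  · convert hΩc hw.2 hz hc0 (sub_nonneg.2 hc1) (add_sub_cancel c 1) using 1
    module

/-- With `c = exp (-(2 * R))`, the point `y` is a convex combination `c • x + (1 - c) • z` with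
`z ∈ Ω` on the chord through `x` and `y`, so `c • symmCore Ω x ⊆ symmCore Ω y`. -/
lemma symmCore_subset_smul_symmCore (hΩo : IsOpen Ω) (hΩc : Convex ℝ Ω) (hΩb : IsBounded Ω)
    (hx : x ∈ Ω) {R : ℝ} (hy : y ∈ hilbertBall Ω x R) :
    symmCore Ω x ⊆ exp (2 * R) • symmCore Ω y := by
  obtain ⟨hyΩ, hd⟩ := hy
  set c := exp (-(2 * R))
  have hc0 : 0 < c := exp_pos _
  have hc1 : c < 1 := exp_lt_one_iff.2 (by linarith [hilbertDist_nonneg hΩo hΩc hΩb hx hyΩ])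
  obtain ⟨z, hz, hyz⟩ : ∃ z ∈ Ω, c • x + (1 - c) • z = y := by
    rcases eq_or_ne x y with rfl | hxy
    · exact ⟨x, hx, by module⟩
    have hb := one_lt_exitTime_sub hΩo hΩc hΩb hx hyΩ hxy
    have hα0 := inv_pos.2 (exitTime_pos hΩo hΩc hΩb hx (sub_ne_zero.2 hxy))
    have hβ0 := inv_pos.2 (zero_lt_one.trans hb)
    have hcb : c < 1 - (exitTime Ω x (y - x))⁻¹ := by
      calc c < exp (-(2 * hilbertDist Ω x y)) := exp_lt_exp.2 (by linarith)
        _ = (1 - (exitTime Ω x (y - x))⁻¹) / (1 + (exitTime Ω x (x - y))⁻¹) := by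
          rw [exp_neg, exp_two_mul_hilbertDist hΩo hΩc hΩb hx hyΩ hxy, inv_div]
        _ < 1 - (exitTime Ω x (y - x))⁻¹ :=
          div_lt_self (sub_pos.2 (inv_lt_one_of_one_lt₀ hb)) (by linarith)
    have h1c : 0 < 1 - c := by linarith
    refine ⟨x + (1 - c)⁻¹ • (y - x), ?_, ?_⟩
    · refine (add_smul_mem_iff_lt_exitTime hΩo hΩc hΩb hx (sub_ne_zero.2 hxy.symm)
        (inv_pos.2 h1c)).2 ?_
      rw [inv_lt_comm₀ h1c (zero_lt_one.trans hb)]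
      linarith
    · rw [smul_add, smul_inv_smul₀ h1c.ne']
      module
  have hsub := smul_symmCore_subset hΩc hz hc0.le hc1.le (x := x)
  rw [hyz] at hsub
  calc symmCore Ω x = exp (2 * R) • c • symmCore Ω x := by
        rw [smul_smul, ← exp_add, add_neg_cancel, exp_zero, one_smul]
    _ ⊆ exp (2 * R) • symmCore Ω y := smul_set_mono hsub

lemma symmCore_subset_finslerBall (hΩo : IsOpen Ω) (hΩc : Convex ℝ Ω) (hΩb : IsBounded Ω)
    (hx : x ∈ Ω) : symmCore Ω x ⊆ {v | finslerNorm Ω x v < 1} := by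
  intro w hw
  rcases eq_or_ne w 0 with rfl | hw0
  · simp [finslerNorm, exitTime_zero hx]
  obtain ⟨h1, h2⟩ := (mem_symmCore_iff hΩo hΩc hΩb hx hw0).1 hw
  have := inv_lt_one_of_one_lt₀ h1
  have := inv_lt_one_of_one_lt₀ h2
  simp only [mem_ofPred_eq, finslerNorm, one_div]
  linarith

lemma finslerBall_subset_two_smul_symmCore (hΩo : IsOpen Ω) (hΩc : Convex ℝ Ω)
    (hΩb : IsBounded Ω) (hx : x ∈ Ω) :
    {v | finslerNorm Ω x v < 1} ⊆ (2 : ℝ) • symmCore Ω x := by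
  intro v hv
  rcases eq_or_ne v 0 with rfl | hv0
  · exact zero_mem_smul_set (zero_mem_symmCore hx)
  have h1 := exitTime_pos hΩo hΩc hΩb hx hv0
  have h2 := exitTime_pos hΩo hΩc hΩb hx (neg_ne_zero.2 hv0)
  have := inv_pos.2 h1
  have := inv_pos.2 h2
  simp only [mem_ofPred_eq, finslerNorm, one_div] at hv
  refine ⟨(2 : ℝ)⁻¹ • v, ⟨?_, ?_⟩, smul_inv_smul₀ two_ne_zero v⟩
  · refine (add_smul_mem_iff_lt_exitTime hΩo hΩc hΩb hx hv0 (by norm_num)).2 ?_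
    exact (inv_lt_comm₀ two_pos h1).2 (by linarith)
  · rw [sub_eq_add_neg, ← smul_neg]
    refine (add_smul_mem_iff_lt_exitTime hΩo hΩc hΩb hx (neg_ne_zero.2 hv0) (by norm_num)).2 ?_
    exact (inv_lt_comm₀ two_pos h2).2 (by linarith)

end HilbertGeometry

open Module

section Packing

variable {E : Type*} [NormedAddCommGroup E] [NormedSpace ℝ E] {S : Set E}

lemma card_le_of_pairwiseDisjoint_vadd_smul [FiniteDimensional ℝ E] (hSo : IsOpen S)
    (hSb : IsBounded S) (hSc : Convex ℝ S) (hS : S.Nonempty) {x : E} {C r : ℝ} (hC : 0 ≤ C) (hr : 0 < r)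
    {t : Finset E} (ht : ↑t ⊆ x +ᵥ C • S)
    (hdisj : (t : Set E).PairwiseDisjoint fun y => y +ᵥ r • S) :
    (t.card : ℝ) ≤ ((C + r) / r) ^ finrank ℝ E := by
  borelize E
  set μ : Measure E := Measure.addHaar
  have hμS : μ S ≠ 0 := (hSo.measure_pos μ hS).ne'
  have hμS' : μ S ≠ ⊤ := hSb.measure_lt_top.ne
  have hvol : ∀ (y : E) {a : ℝ}, 0 ≤ a →
      μ (y +ᵥ a • S) = ENNReal.ofReal (a ^ finrank ℝ E) * μ S := fun y a ha => by
    rw [measure_vadd, Measure.addHaar_smul_of_nonneg μ ha]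
  have hsub : ∀ y ∈ t, y +ᵥ r • S ⊆ x +ᵥ (C + r) • S := by
    intro y hy
    obtain ⟨u, hu, rfl⟩ := ht hy
    rintro _ ⟨w, hw, rfl⟩
    refine ⟨u + w, ?_, by simp [add_assoc]⟩
    rw [hSc.add_smul hC hr.le]
    exact add_mem_add hu hw
  have hle : (t.card : ENNReal) * ENNReal.ofReal (r ^ finrank ℝ E) * μ S ≤
      ENNReal.ofReal ((C + r) ^ finrank ℝ E) * μ S := by
    calc (t.card : ENNReal) * ENNReal.ofReal (r ^ finrank ℝ E) * μ S
        = μ (⋃ y ∈ t, y +ᵥ r • S) := by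
          rw [measure_biUnion_finset hdisj
            fun y _ => ((hSo.smul₀ hr.ne').vadd y).measurableSet, Finset.sum_congr rfl
            fun y _ => hvol y hr.le, Finset.sum_const, nsmul_eq_mul, mul_assoc]
      _ ≤ μ (x +ᵥ (C + r) • S) := measure_mono (Set.iUnion₂_subset hsub)
      _ = _ := hvol x (by positivity)
  rw [ENNReal.mul_le_mul_iff_left hμS hμS', ← ENNReal.ofReal_natCast,
    ← ENNReal.ofReal_mul (by positivity), ENNReal.ofReal_le_ofReal_iff (by positivity)] at hle
  rw [div_pow, le_div_iff₀ (by positivity)]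
  exact hle

lemma mem_vadd_smul_of_not_disjoint (hSc : Convex ℝ S) (hSneg : ∀ w ∈ S, -w ∈ S)
    {y z : E} {r : ℝ} (h : ¬Disjoint (z +ᵥ (r / 2) • S) (y +ᵥ (r / 2) • S)) :
    z ∈ y +ᵥ r • S := by
  obtain ⟨p, ⟨_, ⟨w₁, hw₁, rfl⟩, hp₁⟩, ⟨_, ⟨w₂, hw₂, rfl⟩, hp₂⟩⟩ := Set.not_disjoint_iff.1 h
  refine ⟨r • ((1 / 2 : ℝ) • w₂ + (1 / 2 : ℝ) • -w₁),
    Set.smul_mem_smul_set (hSc hw₂ (hSneg w₁ hw₁) (by norm_num) (by norm_num) (by norm_num)), ?_⟩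
  simp only [vadd_eq_add] at hp₁ hp₂ ⊢
  linear_combination (norm := module) hp₂ - hp₁

theorem exists_finset_subset_cover_vadd_smul [FiniteDimensional ℝ E] (hSo : IsOpen S)
    (hSb : IsBounded S) (hSc : Convex ℝ S) (hS0 : (0 : E) ∈ S) (hSneg : ∀ w ∈ S, -w ∈ S)
    {A : Set E} {x : E} {C r : ℝ} (hC : 0 ≤ C) (hr : 0 < r) (hA : A ⊆ x +ᵥ C • S) :
    ∃ t : Finset E, ↑t ⊆ A ∧ t.card ≤ ⌈((C + r / 2) / (r / 2)) ^ finrank ℝ E⌉₊ ∧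
      A ⊆ ⋃ y ∈ t, y +ᵥ r • S := by
  classical
  let IsPacking : Finset E → Prop := fun t =>
    ↑t ⊆ A ∧ (t : Set E).PairwiseDisjoint fun y => y +ᵥ (r / 2) • S
  have hK : ∀ t, IsPacking t → t.card ≤ ⌈((C + r / 2) / (r / 2)) ^ finrank ℝ E⌉₊ :=
    fun t ht => Nat.cast_le.1 <| (card_le_of_pairwiseDisjoint_vadd_smul hSo hSb hSc ⟨0, hS0⟩ hC
      (half_pos hr) (ht.1.trans hA) ht.2).trans (Nat.le_ceil _)
  obtain ⟨t, ht, hmax⟩ : ∃ t, IsPacking t ∧ ∀ t', IsPacking t' → t'.card ≤ t.card := by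
    have hne : {m | ∃ t, IsPacking t ∧ t.card = m}.Nonempty := ⟨0, ∅, by simp [IsPacking], rfl⟩
    have hbdd : BddAbove {m | ∃ t, IsPacking t ∧ t.card = m} :=
      ⟨_, by rintro _ ⟨t, ht, rfl⟩; exact hK t ht⟩
    obtain ⟨t, ht, hcard⟩ := Nat.sSup_mem hne hbdd
    exact ⟨t, ht, fun t' ht' => hcard ▸ le_csSup hbdd ⟨t', ht', rfl⟩⟩
  refine ⟨t, ht.1, hK t ht, fun z hz => ?_⟩
  by_contra hcov
  have hzt : z ∉ t := fun hzt =>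
    hcov (Set.mem_biUnion hzt ⟨0, zero_mem_smul_set hS0, add_zero z⟩)
  have hins : IsPacking (insert z t) := by
    simp only [IsPacking, Finset.coe_insert]
    refine ⟨Set.insert_subset hz ht.1, ht.2.insert fun y hy _ => ?_⟩
    by_contra hzy
    exact hcov (Set.mem_biUnion hy (mem_vadd_smul_of_not_disjoint hSc hSneg hzy))
  have := hmax _ hins
  rw [Finset.card_insert_of_notMem hzt] at this
  omega

end Packing

theorem exists_finset_cover_hilbertBall {E : Type*} [NormedAddCommGroup E] [NormedSpace ℝ E]
    [FiniteDimensional ℝ E] {Ω : Set E} (hΩo : IsOpen Ω) (hΩc : Convex ℝ Ω) (hΩb : IsBounded Ω)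
    {x : E} (hx : x ∈ Ω) {R r : ℝ} (hR : 0 ≤ R) (hr : 0 < r) :
    ∃ t : Finset E, t.card ≤ ⌈((exp (2 * R) - 1 + tanh r / exp (2 * R) / 2) /
        (tanh r / exp (2 * R) / 2)) ^ finrank ℝ E⌉₊ ∧
      (∀ y ∈ t, y ∈ Ω) ∧ hilbertBall Ω x R ⊆ ⋃ y ∈ t, hilbertBall Ω y r := by
  obtain ⟨t, htA, hcard, hcov⟩ := exists_finset_subset_cover_vadd_smul (isOpen_symmCore hΩo x)
    (isBounded_symmCore hΩb x) (convex_symmCore hΩc x) (zero_mem_symmCore hx)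
    (fun _ => neg_mem_symmCore) (sub_nonneg.2 (one_le_exp_iff.2 (by positivity)))
    (div_pos (tanh_pos hr) (exp_pos _))
    fun y hy => ⟨y - x, sub_mem_smul_symmCore hΩo hΩc hΩb hx hy, add_sub_cancel x y⟩
  refine ⟨t, hcard, fun y hy => (htA hy).1, hcov.trans (Set.iUnion₂_mono fun y hy => ?_)⟩
  rintro _ ⟨_, ⟨w, hw, rfl⟩, rfl⟩
  obtain ⟨w', hw', rfl⟩ := symmCore_subset_smul_symmCore hΩo hΩc hΩb hx (htA hy) hw
  simp only [vadd_eq_add, smul_smul, div_mul_cancel₀ _ (exp_pos _).ne']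
  exact add_tanh_smul_mem_hilbertBall hΩo hΩc hΩb (htA hy).1 hw' hr

section BusemannVolume

variable {n : ℕ} {Ω : Set (EuclideanSpace ℝ (Fin n))} {x y : EuclideanSpace ℝ (Fin n)}

lemma volume_vadd_smul (x : EuclideanSpace ℝ (Fin n)) {r : ℝ} (hr : 0 ≤ r)
    (s : Set (EuclideanSpace ℝ (Fin n))) :
    volume (x +ᵥ r • s) = ENNReal.ofReal (r ^ n) * volume s := by
  rw [measure_vadd, Measure.addHaar_smul_of_nonneg _ hr, finrank_euclideanSpace_fin]

lemma measureReal_smul {r : ℝ} (hr : 0 ≤ r) (s : Set (EuclideanSpace ℝ (Fin n))) :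
    volume.real (r • s) = r ^ n * volume.real s := by
  simpa [measureReal_def, ENNReal.toReal_mul, hr] using
    congrArg ENNReal.toReal (volume_vadd_smul 0 hr s)

lemma measureReal_symmCore_pos (hΩo : IsOpen Ω) (hΩb : IsBounded Ω) (hx : x ∈ Ω) :
    0 < volume.real (symmCore Ω x) :=
  ENNReal.toReal_pos ((isOpen_symmCore hΩo x).measure_pos _ ⟨0, zero_mem_symmCore hx⟩).ne'
    (isBounded_symmCore hΩb x).measure_lt_top.ne

lemma measureReal_finslerBall_le (hΩo : IsOpen Ω) (hΩc : Convex ℝ Ω) (hΩb : IsBounded Ω)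
    (hx : x ∈ Ω) {R : ℝ} (hy : y ∈ hilbertBall Ω x R) :
    volume.real {v | finslerNorm Ω y v < 1} ≤
      (2 * exp (2 * R)) ^ n * volume.real (symmCore Ω x) := by
  have hsub : {v | finslerNorm Ω y v < 1} ⊆ (2 * exp (2 * R)) • symmCore Ω x := by
    rw [mul_smul]
    exact (finslerBall_subset_two_smul_symmCore hΩo hΩc hΩb hy.1).trans (smul_set_mono
      (symmCore_subset_smul_symmCore hΩo hΩc hΩb hy.1 (mem_hilbertBall_comm hΩo hΩc hΩb hx hy)))
  rw [← measureReal_smul (by positivity)]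
  exact measureReal_mono hsub (((isBounded_symmCore hΩb x).smul₀ _).measure_lt_top.ne)

lemma measureReal_symmCore_le (hΩo : IsOpen Ω) (hΩc : Convex ℝ Ω) (hΩb : IsBounded Ω)
    (hx : x ∈ Ω) {R : ℝ} (hy : y ∈ hilbertBall Ω x R) :
    volume.real (symmCore Ω x) ≤ exp (2 * R) ^ n * volume.real {v | finslerNorm Ω y v < 1} := by
  have hW : IsBounded {v | finslerNorm Ω y v < 1} :=
    ((isBounded_symmCore hΩb y).smul₀ 2).subset
      (finslerBall_subset_two_smul_symmCore hΩo hΩc hΩb hy.1)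
  rw [← measureReal_smul (exp_pos _).le]
  exact measureReal_mono ((symmCore_subset_smul_symmCore hΩo hΩc hΩb hx hy).trans
    (smul_set_mono (symmCore_subset_finslerBall hΩo hΩc hΩb hy.1)))
    ((hW.smul₀ _).measure_lt_top.ne)

lemma le_busemannVolume_hilbertBall (hΩo : IsOpen Ω) (hΩc : Convex ℝ Ω) (hΩb : IsBounded Ω)
    (hx : x ∈ Ω) {R : ℝ} (hR : 0 < R) :
    ENNReal.ofReal ((volume (ball (0 : EuclideanSpace ℝ (Fin n)) 1)).toReal * tanh R ^ n /
      (2 * exp (2 * R)) ^ n) ≤ busemannVolume Ω (hilbertBall Ω x R) := by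
  set ω := (volume (ball (0 : EuclideanSpace ℝ (Fin n)) 1)).toReal
  have hω : 0 ≤ ω := ENNReal.toReal_nonneg
  set m := volume.real (symmCore Ω x) with hm_def
  have hSfin : volume (symmCore Ω x) ≠ ⊤ := (isBounded_symmCore hΩb x).measure_lt_top.ne
  have hm : 0 < m := measureReal_symmCore_pos hΩo hΩb hx
  have hbound : ∀ y ∈ hilbertBall Ω x R, ω / ((2 * exp (2 * R)) ^ n * m) ≤
      ω / (volume {v | finslerNorm Ω y v < 1}).toReal := fun y hy =>
    div_le_div_of_nonneg_left ENNReal.toReal_nonneg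
      (pos_of_mul_pos_right (hm.trans_le (measureReal_symmCore_le hΩo hΩc hΩb hx hy))
        (by positivity))
      (measureReal_finslerBall_le hΩo hΩc hΩb hx hy)
  set U := x +ᵥ tanh R • symmCore Ω x
  have hU : U ⊆ hilbertBall Ω x R := by
    rintro _ ⟨_, ⟨w, hw, rfl⟩, rfl⟩
    exact add_tanh_smul_mem_hilbertBall hΩo hΩc hΩb hx hw hR
  calc ENNReal.ofReal (ω * tanh R ^ n / (2 * exp (2 * R)) ^ n)
      = ENNReal.ofReal (ω / ((2 * exp (2 * R)) ^ n * m)) * volume U := by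
        rw [volume_vadd_smul x (tanh_pos hR).le, ← ofReal_measureReal hSfin, ← hm_def,
          ← ENNReal.ofReal_mul (pow_nonneg (tanh_pos hR).le n),
          ← ENNReal.ofReal_mul (div_nonneg hω (by positivity))]
        congr 1
        field_simp
    _ = ∫⁻ _ in U, ENNReal.ofReal (ω / ((2 * exp (2 * R)) ^ n * m)) :=
        (setLIntegral_const _ _).symm
    _ ≤ ∫⁻ y in U, ENNReal.ofReal (ω / (volume {v | finslerNorm Ω y v < 1}).toReal) :=
        setLIntegral_mono' (((isOpen_symmCore hΩo x).smul₀ (tanh_pos hR).ne').vadd x).measurableSet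
          fun y hy => ENNReal.ofReal_le_ofReal (hbound y (hU hy))
    _ ≤ busemannVolume Ω (hilbertBall Ω x R) := lintegral_mono_set hU

lemma busemannVolume_hilbertBall_le (hΩo : IsOpen Ω) (hΩc : Convex ℝ Ω) (hΩb : IsBounded Ω)
    (hx : x ∈ Ω) {R : ℝ} (hR : 0 ≤ R) :
    busemannVolume Ω (hilbertBall Ω x R) ≤ ENNReal.ofReal
      ((volume (ball (0 : EuclideanSpace ℝ (Fin n)) 1)).toReal * exp (2 * R) ^ n *
        (exp (2 * R) - 1) ^ n) := by
  set ω := (volume (ball (0 : EuclideanSpace ℝ (Fin n)) 1)).toReal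
  have hω : 0 ≤ ω := ENNReal.toReal_nonneg
  set m := volume.real (symmCore Ω x) with hm_def
  have hSfin : volume (symmCore Ω x) ≠ ⊤ := (isBounded_symmCore hΩb x).measure_lt_top.ne
  have hm : 0 < m := measureReal_symmCore_pos hΩo hΩb hx
  have hρ : 0 ≤ exp (2 * R) - 1 := sub_nonneg.2 (one_le_exp_iff.2 (by positivity))
  have hbound : ∀ y ∈ hilbertBall Ω x R,
      ω / (volume {v | finslerNorm Ω y v < 1}).toReal ≤ ω * exp (2 * R) ^ n / m := fun y hy => by
    have h := measureReal_symmCore_le hΩo hΩc hΩb hx hy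
    have hW := pos_of_mul_pos_right (hm.trans_le h) (by positivity)
    rw [← measureReal_def, div_le_div_iff₀ hW hm, mul_assoc]
    exact mul_le_mul_of_nonneg_left h hω
  have hB : hilbertBall Ω x R ⊆ x +ᵥ (exp (2 * R) - 1) • symmCore Ω x := fun y hy =>
    ⟨y - x, sub_mem_smul_symmCore hΩo hΩc hΩb hx hy, add_sub_cancel x y⟩
  calc busemannVolume Ω (hilbertBall Ω x R)
      ≤ ∫⁻ _ in hilbertBall Ω x R, ENNReal.ofReal (ω * exp (2 * R) ^ n / m) :=
        setLIntegral_mono measurable_const fun y hy => ENNReal.ofReal_le_ofReal (hbound y hy)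
    _ = ENNReal.ofReal (ω * exp (2 * R) ^ n / m) * volume (hilbertBall Ω x R) :=
        setLIntegral_const _ _
    _ ≤ ENNReal.ofReal (ω * exp (2 * R) ^ n / m) *
          volume (x +ᵥ (exp (2 * R) - 1) • symmCore Ω x) := by
        gcongr
    _ = _ := by
        rw [volume_vadd_smul x hρ, ← ofReal_measureReal hSfin, ← hm_def,
          ← ENNReal.ofReal_mul (pow_nonneg hρ n), ← ENNReal.ofReal_mul (by positivity)]
        congr 1
        field_simp

end BusemannVolume

theorem stmt_15_general (n : ℕ) :
    (∀ R : ℝ, 0 < R → ∃ v V : ENNReal, 0 < v ∧ v ≤ V ∧ V < ⊤ ∧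
      ∀ Ω : Set (EuclideanSpace ℝ (Fin n)),
        IsOpen Ω → Convex ℝ Ω → Bornology.IsBounded Ω → ∀ x ∈ Ω,
          v ≤ busemannVolume Ω (hilbertBall Ω x R) ∧
            busemannVolume Ω (hilbertBall Ω x R) ≤ V) ∧
    ∃ K : ℕ, ∀ Ω : Set (EuclideanSpace ℝ (Fin n)),
      IsOpen Ω → Convex ℝ Ω → Bornology.IsBounded Ω → ∀ x ∈ Ω,
        ∃ t : Finset (EuclideanSpace ℝ (Fin n)), t.card ≤ K ∧ (∀ y ∈ t, y ∈ Ω) ∧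
          hilbertBall Ω x 4 ⊆ ⋃ y ∈ t, hilbertBall Ω y 1 := by
  refine ⟨fun R hR => ?_, ⟨_, fun Ω hΩo hΩc hΩb x hx =>
    exists_finset_cover_hilbertBall hΩo hΩc hΩb hx (by norm_num) one_pos⟩⟩
  have hω : 0 < (volume (ball (0 : EuclideanSpace ℝ (Fin n)) 1)).toReal :=
    ENNReal.toReal_pos (measure_ball_pos volume 0 one_pos).ne' measure_ball_lt_top.ne
  have htanh := tanh_pos hR
  refine ⟨_, _ + ENNReal.ofReal ((volume (ball (0 : EuclideanSpace ℝ (Fin n)) 1)).toReal *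
    exp (2 * R) ^ n * (exp (2 * R) - 1) ^ n), ENNReal.ofReal_pos.2 (by positivity), le_self_add,
    ENNReal.add_lt_top.2 ⟨ENNReal.ofReal_lt_top, ENNReal.ofReal_lt_top⟩,
    fun Ω hΩo hΩc hΩb x hx => ⟨le_busemannVolume_hilbertBall hΩo hΩc hΩb hx hR,
      (busemannVolume_hilbertBall_le hΩo hΩc hΩb hx hR.le).trans le_add_self⟩⟩

/-- For each `R > 0` there are constants `0 < v(R) ≤ V(R)`, independent
of the convex set, bounding the Busemann volume of any ball of radius `R` in any
`n`-dimensional Hilbert geometry.  Consequently there is `K = K(n)` such that in any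
Hilbert geometry every ball of radius `4` is covered by at most `K` balls of radius `1`. -/
theorem stmt_15 (n : ℕ) (hn : 1 ≤ n) :
    (∀ R : ℝ, 0 < R → ∃ v V : ENNReal, 0 < v ∧ v ≤ V ∧ V < ⊤ ∧
      ∀ Ω : Set (EuclideanSpace ℝ (Fin n)),
        IsOpen Ω → Convex ℝ Ω → Bornology.IsBounded Ω → ∀ x ∈ Ω,
          v ≤ busemannVolume Ω (hilbertBall Ω x R) ∧
            busemannVolume Ω (hilbertBall Ω x R) ≤ V) ∧
    ∃ K : ℕ, ∀ Ω : Set (EuclideanSpace ℝ (Fin n)),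
      IsOpen Ω → Convex ℝ Ω → Bornology.IsBounded Ω → ∀ x ∈ Ω,
        ∃ t : Finset (EuclideanSpace ℝ (Fin n)), t.card ≤ K ∧ (∀ y ∈ t, y ∈ Ω) ∧
          hilbertBall Ω x 4 ⊆ ⋃ y ∈ t, hilbertBall Ω y 1 :=
  stmt_15_general n
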